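/- arXiv:math/0512567 — 2 statements merged into one kernel-verified Lean document; each statement's English description precedes it below -/
import Mathlib

section
/- Let S = {0, a_1, a_2, a_3, x_1, x_2} be a commutative semigroup with six distinct elements, with zero element 0, such that for distinct nonzero u, v ∈ S one has uv = 0 if and only if {u,v} is one of {a_1,a_2}, {a_1,a_3}, {a_2,a_3}, {a_1,x_1}, {a_2,x_2} (i.e., Γ(S) is M_{3,2} with this labeling). Then necessarily a_1x_2 = a_1, a_2x_1 = a_2, a_3x_1 = a_3, a_3x_2 = a_3, x_1² = x_1, x_2² = x_2, x_1x_2 = a_3, a_3² = a_3, a_1² ∈ {0, a_1}, and a_2² ∈ {0, a_2}. -/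
/-!
Everything rests on `u * s = 0 → u * (s * t) = 0`: a product inherits the annihilators of its
factors. Among the nonzero labels other than `x1` itself, only `a1` is annihilated by `x1`, which
pins down `a1 x2 = a1` and, once `x1² ≠ 0` is known, `a1² ∈ {0, a1}`. Left multiplication by `a2`
fixes `x1²`, so `x1² ∈ {a2, x1}`; if `x1² = a2`, both `a3 x1` and `x1 x2` are killed by `x1`, hence
equal `a1`, and then `a1 x2 = a3 x1 x2 = a3 a1 = 0`, which is absurd. So `x1` and likewise `x2`
are idempotent, and `x1 x2`, killed by `a1` and `a2` but fixed by `x1` and `x2`, must be `a3`;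
the remaining products follow. The relabelling `a1 ↔ a2`, `x1 ↔ x2` preserves `M_{3,2}` and
supplies the symmetric half of every statement.
-/

/-- A commutative semigroup with a (left- and right-) absorbing zero element. -/
class CommSemigroupWithZero (S : Type*) extends CommSemigroup S, MulZeroClass S

/-- A zero-divisor semigroup: every element is annihilated by some nonzero element. -/
def IsZeroDivisorSemigroup (S : Type*) [CommSemigroupWithZero S] : Prop :=
  ∀ s : S, ∃ t : S, t ≠ 0 ∧ s * t = 0

/-- The zero-divisor graph Γ(S): vertices are the nonzero zero-divisors, distinct
vertices are adjacent iff their product is zero. -/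
def zdGraph (S : Type*) [CommSemigroupWithZero S] :
    SimpleGraph {s : S // s ≠ 0 ∧ ∃ t : S, t ≠ 0 ∧ s * t = 0} where
  Adj x y := x ≠ y ∧ (x : S) * y = 0
  symm := by
    constructor
    rintro x y ⟨h1, h2⟩
    exact ⟨h1.symm, by rwa [mul_comm]⟩
  loopless := ⟨fun x h => h.1 rfl⟩

section

variable {S : Type*} [CommSemigroupWithZero S]

/-- The multiplication table of `S = {0, a1, a2, a3, x1, x2}` as far as `Γ(S) = M_{3,2}` fixes it:
the five edges multiply to zero, the other five pairs of distinct labels do not. -/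
structure IsM32Table (a1 a2 a3 x1 x2 : S) : Prop where
  exhaustive : ∀ s : S, s = 0 ∨ s = a1 ∨ s = a2 ∨ s = a3 ∨ s = x1 ∨ s = x2
  a1_mul_a2 : a1 * a2 = 0
  a1_mul_a3 : a1 * a3 = 0
  a2_mul_a3 : a2 * a3 = 0
  a1_mul_x1 : a1 * x1 = 0
  a2_mul_x2 : a2 * x2 = 0
  a1_mul_x2_ne_zero : a1 * x2 ≠ 0
  a2_mul_x1_ne_zero : a2 * x1 ≠ 0
  a3_mul_x1_ne_zero : a3 * x1 ≠ 0
  a3_mul_x2_ne_zero : a3 * x2 ≠ 0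
  x1_mul_x2_ne_zero : x1 * x2 ≠ 0

theorem isM32Table_of_mul_eq_zero_iff {a1 a2 a3 x1 x2 : S}
    (hnodup : List.Nodup [0, a1, a2, a3, x1, x2])
    (hall : ∀ s : S, s = 0 ∨ s = a1 ∨ s = a2 ∨ s = a3 ∨ s = x1 ∨ s = x2)
    (hadj : ∀ u v : S, u ≠ 0 → v ≠ 0 → u ≠ v →
      (u * v = 0 ↔
        ({u, v} : Set S) = {a1, a2} ∨ ({u, v} : Set S) = {a1, a3} ∨
        ({u, v} : Set S) = {a2, a3} ∨ ({u, v} : Set S) = {a1, x1} ∨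
        ({u, v} : Set S) = {a2, x2})) :
    IsM32Table a1 a2 a3 x1 x2 := by
  simp only [List.nodup_cons, List.mem_cons, List.not_mem_nil, or_false, List.nodup_nil,
    and_true, not_or] at hnodup
  obtain ⟨⟨h01, h02, h03, h04, h05⟩, ⟨h12, h13, h14, h15⟩, ⟨h23, h24, h25⟩, ⟨h34, h35⟩,
    h45, -⟩ := hnodup
  have edge {u v : S} (hu : 0 ≠ u) (hv : 0 ≠ v) (huv : u ≠ v) := (hadj u v hu.symm hv.symm huv).2
  have nonEdge {u v : S} (hu : 0 ≠ u) (hv : 0 ≠ v) (huv : u ≠ v) :=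
    mt (hadj u v hu.symm hv.symm huv).1
  refine ⟨hall, edge h01 h02 h12 (by simp), edge h01 h03 h13 (by simp),
    edge h02 h03 h23 (by simp), edge h01 h04 h14 (by simp), edge h02 h05 h25 (by simp),
    nonEdge h01 h05 h15 ?_, nonEdge h02 h04 h24 ?_, nonEdge h03 h04 h34 ?_,
    nonEdge h03 h05 h35 ?_, nonEdge h04 h05 h45 ?_⟩ <;>
  simp only [Set.pair_eq_pair_iff] <;> tauto

namespace IsM32Table

variable {a1 a2 a3 x1 x2 : S}

theorem swap (h : IsM32Table a1 a2 a3 x1 x2) : IsM32Table a2 a1 a3 x2 x1 where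
  exhaustive s := by have := h.exhaustive s; tauto
  a1_mul_a2 := mul_comm a2 a1 ▸ h.a1_mul_a2
  a1_mul_a3 := h.a2_mul_a3
  a2_mul_a3 := h.a1_mul_a3
  a1_mul_x1 := h.a2_mul_x2
  a2_mul_x2 := h.a1_mul_x1
  a1_mul_x2_ne_zero := h.a2_mul_x1_ne_zero
  a2_mul_x1_ne_zero := h.a1_mul_x2_ne_zero
  a3_mul_x1_ne_zero := h.a3_mul_x2_ne_zero
  a3_mul_x2_ne_zero := h.a3_mul_x1_ne_zero
  x1_mul_x2_ne_zero := mul_comm x1 x2 ▸ h.x1_mul_x2_ne_zero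

theorem a1_ne_zero (h : IsM32Table a1 a2 a3 x1 x2) : a1 ≠ 0 :=
  left_ne_zero_of_mul h.a1_mul_x2_ne_zero

theorem x1_ne_zero (h : IsM32Table a1 a2 a3 x1 x2) : x1 ≠ 0 :=
  left_ne_zero_of_mul h.x1_mul_x2_ne_zero

theorem eq_a1_of_x1_mul_eq_zero (h : IsM32Table a1 a2 a3 x1 x2) {w : S} (hw : w ≠ 0)
    (hwx : w ≠ x1) (hx : x1 * w = 0) : w = a1 := by
  rcases h.exhaustive w with rfl | rfl | rfl | rfl | rfl | rfl
  · exact absurd rfl hw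
  · rfl
  · exact absurd (mul_comm x1 w ▸ hx) h.a2_mul_x1_ne_zero
  · exact absurd (mul_comm x1 w ▸ hx) h.a3_mul_x1_ne_zero
  · exact absurd rfl hwx
  · exact absurd hx h.x1_mul_x2_ne_zero

theorem a1_mul_x2 (h : IsM32Table a1 a2 a3 x1 x2) : a1 * x2 = a1 := by
  refine h.eq_a1_of_x1_mul_eq_zero h.a1_mul_x2_ne_zero (fun hx => h.a3_mul_x1_ne_zero ?_) ?_
  · rw [← hx, ← mul_assoc, mul_comm a3, h.a1_mul_a3, zero_mul]
  · rw [← mul_assoc, mul_comm x1, h.a1_mul_x1, zero_mul]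

theorem a2_mul_x1 (h : IsM32Table a1 a2 a3 x1 x2) : a2 * x1 = a2 :=
  h.swap.a1_mul_x2

theorem x1_mul_x1_eq_a2_or_x1 (h : IsM32Table a1 a2 a3 x1 x2) : x1 * x1 = a2 ∨ x1 * x1 = x1 := by
  have ha2 : a2 * (x1 * x1) = a2 := by rw [← mul_assoc, h.a2_mul_x1, h.a2_mul_x1]
  have ha2_ne_zero : a2 ≠ 0 := h.swap.a1_ne_zero
  rcases h.exhaustive (x1 * x1) with hs | hs | hs | hs | hs | hs <;> rw [hs] at ha2 ⊢
  · exact absurd (ha2.symm.trans (mul_zero a2)) ha2_ne_zero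
  · exact absurd (ha2.symm.trans (mul_comm a2 a1 ▸ h.a1_mul_a2)) ha2_ne_zero
  · exact .inl rfl
  · exact absurd (ha2.symm.trans h.a2_mul_a3) ha2_ne_zero
  · exact .inr rfl
  · exact absurd (ha2.symm.trans h.a2_mul_x2) ha2_ne_zero

theorem x1_mul_x1_ne_a2 (h : IsM32Table a1 a2 a3 x1 x2) : x1 * x1 ≠ a2 := by
  intro hsq
  have hsq_ne_zero : x1 * x1 ≠ 0 := hsq ▸ h.swap.a1_ne_zero
  have h31 : a3 * x1 = a1 := by
    have hx : x1 * (a3 * x1) = 0 := by rw [mul_left_comm, hsq, mul_comm, h.a2_mul_a3]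
    exact h.eq_a1_of_x1_mul_eq_zero h.a3_mul_x1_ne_zero (fun he => hsq_ne_zero (by rwa [he] at hx)) hx
  have h12 : x1 * x2 = a1 := by
    have hx : x1 * (x1 * x2) = 0 := by rw [← mul_assoc, hsq, h.a2_mul_x2]
    exact h.eq_a1_of_x1_mul_eq_zero h.x1_mul_x2_ne_zero (fun he => hsq_ne_zero (by rwa [he] at hx)) hx
  apply h.a1_mul_x2_ne_zero
  rw [← h31, mul_assoc, h12, mul_comm, h.a1_mul_a3]

theorem x1_mul_x1 (h : IsM32Table a1 a2 a3 x1 x2) : x1 * x1 = x1 :=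
  h.x1_mul_x1_eq_a2_or_x1.resolve_left h.x1_mul_x1_ne_a2

theorem x2_mul_x2 (h : IsM32Table a1 a2 a3 x1 x2) : x2 * x2 = x2 :=
  h.swap.x1_mul_x1

theorem x1_mul_x2 (h : IsM32Table a1 a2 a3 x1 x2) : x1 * x2 = a3 := by
  have ha1 : a1 * (x1 * x2) = 0 := by rw [← mul_assoc, h.a1_mul_x1, zero_mul]
  have ha2 : a2 * (x1 * x2) = 0 := by rw [mul_left_comm, h.a2_mul_x2, mul_zero]
  have hx1 : x1 * (x1 * x2) = x1 * x2 := by rw [← mul_assoc, h.x1_mul_x1]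
  have hx2 : x2 * (x1 * x2) = x1 * x2 := by rw [mul_left_comm, h.x2_mul_x2]
  rcases h.exhaustive (x1 * x2) with hp | hp | hp | hp | hp | hp
  · exact absurd hp h.x1_mul_x2_ne_zero
  · rw [hp, mul_comm, h.a1_mul_x1] at hx1
    exact absurd hx1.symm h.a1_ne_zero
  · rw [hp, mul_comm, h.a2_mul_x2] at hx2
    exact absurd hx2.symm h.swap.a1_ne_zero
  · exact hp
  · rw [hp, h.a2_mul_x1] at ha2
    exact absurd ha2 h.swap.a1_ne_zero
  · rw [hp, h.a1_mul_x2] at ha1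
    exact absurd ha1 h.a1_ne_zero

theorem a3_mul_x1 (h : IsM32Table a1 a2 a3 x1 x2) : a3 * x1 = a3 := by
  rw [← h.x1_mul_x2, mul_right_comm, h.x1_mul_x1]

theorem a3_mul_x2 (h : IsM32Table a1 a2 a3 x1 x2) : a3 * x2 = a3 :=
  h.swap.a3_mul_x1

theorem a3_mul_a3 (h : IsM32Table a1 a2 a3 x1 x2) : a3 * a3 = a3 := by
  nth_rw 2 [← h.x1_mul_x2]
  rw [← mul_assoc, h.a3_mul_x1, h.a3_mul_x2]

theorem a1_mul_a1 (h : IsM32Table a1 a2 a3 x1 x2) : a1 * a1 = 0 ∨ a1 * a1 = a1 := by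
  have hx : x1 * (a1 * a1) = 0 := by rw [← mul_assoc, mul_comm x1, h.a1_mul_x1, zero_mul]
  refine or_iff_not_imp_left.2 fun hne => h.eq_a1_of_x1_mul_eq_zero hne (fun he => ?_) hx
  rw [he, h.x1_mul_x1] at hx
  exact h.x1_ne_zero hx

theorem a2_mul_a2 (h : IsM32Table a1 a2 a3 x1 x2) : a2 * a2 = 0 ∨ a2 * a2 = a2 :=
  h.swap.a1_mul_a1

end IsM32Table

end

/-- **Theorem 2.3(2), necessity.** If S = {0, a₁, a₂, a₃, x₁, x₂} is a commutative
semigroup with zero whose zero-divisor graph is M_{3,2} (with edges a₁a₂, a₁a₃,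
a₂a₃, a₁x₁, a₂x₂), then the multiplication is forced as listed. -/
theorem M32_multiplication_forced (S : Type*) [CommSemigroupWithZero S]
    (a1 a2 a3 x1 x2 : S)
    (hnodup : List.Nodup [0, a1, a2, a3, x1, x2])
    (hall : ∀ s : S, s = 0 ∨ s = a1 ∨ s = a2 ∨ s = a3 ∨ s = x1 ∨ s = x2)
    (hadj : ∀ u v : S, u ≠ 0 → v ≠ 0 → u ≠ v →
      (u * v = 0 ↔
        ({u, v} : Set S) = {a1, a2} ∨ ({u, v} : Set S) = {a1, a3} ∨
        ({u, v} : Set S) = {a2, a3} ∨ ({u, v} : Set S) = {a1, x1} ∨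
        ({u, v} : Set S) = {a2, x2})) :
    a1 * x2 = a1 ∧ a2 * x1 = a2 ∧ a3 * x1 = a3 ∧ a3 * x2 = a3 ∧
    x1 * x1 = x1 ∧ x2 * x2 = x2 ∧ x1 * x2 = a3 ∧ a3 * a3 = a3 ∧
    (a1 * a1 = 0 ∨ a1 * a1 = a1) ∧ (a2 * a2 = 0 ∨ a2 * a2 = a2) := by
  have h := isM32Table_of_mul_eq_zero_iff hnodup hall hadj
  exact ⟨h.a1_mul_x2, h.a2_mul_x1, h.a3_mul_x1, h.a3_mul_x2, h.x1_mul_x1, h.x2_mul_x2,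
    h.x1_mul_x2, h.a3_mul_a3, h.a1_mul_a1, h.a2_mul_a2⟩
end

section
/- For n ≥ k ≥ 4, let M_{n,k} be the simple graph on the vertices a_1, …, a_n, x_1, …, x_k whose edges are a_i–a_j for i ≠ j together with a_i–x_i for 1 ≤ i ≤ k (the complete graph K_n together with k end vertices attached to k distinct vertices). Then there is no commutative zero-divisor semigroup S whose zero-divisor graph Γ(S) is isomorphic to M_{n,k}. -/
/-- The graph M_{n,k} (for k ≤ n): the complete graph Kₙ on the vertices `inl i`
together with k end vertices `inr j`, where `inr j` is attached to `inl j`. -/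
def Mgraph (n k : ℕ) : SimpleGraph (Fin n ⊕ Fin k) :=
  SimpleGraph.fromRel (fun u v =>
    match u, v with
    | Sum.inl i, Sum.inl j => i ≠ j
    | Sum.inl i, Sum.inr j => (i : ℕ) = (j : ℕ)
    | _, _ => False)

open SimpleGraph

namespace Mgraph

variable {n k : ℕ}

@[simp]
theorem adj_inl_inl {i j : Fin n} : (Mgraph n k).Adj (.inl i) (.inl j) ↔ i ≠ j := by
  simp [Mgraph, fromRel_adj]; tauto

@[simp]
theorem adj_inl_inr {i : Fin n} {j : Fin k} :
    (Mgraph n k).Adj (.inl i) (.inr j) ↔ (i : ℕ) = j := by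
  simp [Mgraph, fromRel_adj]

@[simp]
theorem adj_inr_inl {j : Fin k} {i : Fin n} :
    (Mgraph n k).Adj (.inr j) (.inl i) ↔ (i : ℕ) = j := by
  simp [Mgraph, fromRel_adj]

@[simp]
theorem not_adj_inr_inr {j j' : Fin k} : ¬ (Mgraph n k).Adj (.inr j) (.inr j') := by
  simp [Mgraph, fromRel_adj]

theorem exists_eq_inl_of_eq_or_adj {u : Fin n ⊕ Fin k} {i i' : Fin n} (hii' : i ≠ i')
    (hi : u = .inl i ∨ (Mgraph n k).Adj u (.inl i))
    (hi' : u = .inl i' ∨ (Mgraph n k).Adj u (.inl i')) : ∃ m, u = .inl m := by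
  rcases u with m | j
  · exact ⟨m, rfl⟩
  · simp only [reduceCtorEq, adj_inr_inl, false_or] at hi hi'
    exact absurd (Fin.ext (hi.trans hi'.symm)) hii'

end Mgraph

namespace zdGraph

variable {S : Type*} [CommSemigroupWithZero S] {V : Type*} {G : SimpleGraph V}

theorem mul_eq_zero_iff_adj (φ : zdGraph S ≃g G) {a b : V} (hab : a ≠ b) :
    (φ.symm a : S) * φ.symm b = 0 ↔ G.Adj a b := by
  rw [← φ.symm.map_adj_iff]
  exact ⟨fun h => ⟨φ.symm.injective.ne hab, h⟩, And.right⟩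

theorem eq_or_adj_of_mul_eq_zero (φ : zdGraph S ≃g G)
    {w : {s : S // s ≠ 0 ∧ ∃ t : S, t ≠ 0 ∧ s * t = 0}} {a : V}
    (h : (w : S) * φ.symm a = 0) : φ w = a ∨ G.Adj (φ w) a := by
  by_cases hw : w = φ.symm a
  · exact .inl (by rw [hw, RelIso.apply_symm_apply])
  · exact .inr (by simpa using φ.map_adj_iff.mpr ⟨hw, h⟩)

end zdGraph

namespace Mgraph

variable {S : Type*} [CommSemigroupWithZero S] {n k : ℕ}

def core (φ : zdGraph S ≃g Mgraph n k) (i : Fin n) : S := φ.symm (.inl i)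

def leaf (φ : zdGraph S ≃g Mgraph n k) (j : Fin k) : S := φ.symm (.inr j)

variable (φ : zdGraph S ≃g Mgraph n k)

theorem core_mul_core {i i' : Fin n} (h : i ≠ i') : core φ i * core φ i' = 0 :=
  (zdGraph.mul_eq_zero_iff_adj φ (by simpa)).mpr (adj_inl_inl.mpr h)

theorem core_mul_leaf_eq_zero_iff (i : Fin n) (j : Fin k) :
    core φ i * leaf φ j = 0 ↔ (i : ℕ) = j := by
  rw [core, leaf, zdGraph.mul_eq_zero_iff_adj φ (by simp), adj_inl_inr]

theorem core_castLE_mul_leaf (hkn : k ≤ n) (j : Fin k) :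
    core φ (Fin.castLE hkn j) * leaf φ j = 0 :=
  (core_mul_leaf_eq_zero_iff φ _ _).mpr rfl

theorem leaf_mul_leaf_ne_zero {j j' : Fin k} (h : j ≠ j') : leaf φ j * leaf φ j' ≠ 0 := by
  rw [leaf, leaf, Ne, zdGraph.mul_eq_zero_iff_adj φ (by simpa)]
  exact not_adj_inr_inr

theorem exists_eq_core_of_mul_core_eq_zero {s : S} (hs : s ≠ 0) {i i' : Fin n} (hii' : i ≠ i')
    (hi : s * core φ i = 0) (hi' : s * core φ i' = 0) : ∃ m, s = core φ m := by
  let w : {s : S // s ≠ 0 ∧ ∃ t : S, t ≠ 0 ∧ s * t = 0} := ⟨s, hs, _, (φ.symm _).2.1, hi⟩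
  obtain ⟨m, hm⟩ := exists_eq_inl_of_eq_or_adj hii'
    (zdGraph.eq_or_adj_of_mul_eq_zero φ (w := w) hi)
    (zdGraph.eq_or_adj_of_mul_eq_zero φ (w := w) hi')
  exact ⟨m, by rw [core, ← hm, RelIso.symm_apply_apply]⟩

theorem exists_leaf_mul_leaf_eq_core (hkn : k ≤ n) {j j' : Fin k} (h : j ≠ j') :
    ∃ m, leaf φ j * leaf φ j' = core φ m := by
  refine exists_eq_core_of_mul_core_eq_zero φ (leaf_mul_leaf_ne_zero φ h)
    (i := Fin.castLE hkn j) (i' := Fin.castLE hkn j') (by simpa [Fin.ext_iff] using h) ?_ ?_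
  · rw [mul_right_comm, mul_comm (leaf φ j), core_castLE_mul_leaf, zero_mul]
  · rw [mul_assoc, mul_comm (leaf φ j'), core_castLE_mul_leaf, mul_zero]

theorem leaf_mul_leaf_eq_core_castLE (hkn : k ≤ n) {j₀ j₁ j : Fin k} (h₀₁ : j₀ ≠ j₁)
    (h₀ : j ≠ j₀) (h₁ : j ≠ j₁) {m : Fin n} (hm : leaf φ j₀ * leaf φ j₁ = core φ m) :
    m = Fin.castLE hkn j := by
  by_contra hmj
  have hcore {j' : Fin k} (h : j ≠ j') :
      core φ (Fin.castLE hkn j) * core φ (Fin.castLE hkn j') = 0 :=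
    core_mul_core φ (by simpa [Fin.ext_iff] using h)
  set y := core φ (Fin.castLE hkn j) * leaf φ j₀
  have hy : y ≠ 0 := mt (core_mul_leaf_eq_zero_iff φ _ _).mp (by simpa [Fin.ext_iff] using h₀)
  obtain ⟨t, ht⟩ := exists_eq_core_of_mul_core_eq_zero φ hy
    (i := Fin.castLE hkn j₀) (i' := Fin.castLE hkn j₁) (by simpa [Fin.ext_iff] using h₀₁)
    (by rw [mul_right_comm, hcore h₀, zero_mul]) (by rw [mul_right_comm, hcore h₁, zero_mul])
  have htj : (t : ℕ) = j := by
    rw [← core_mul_leaf_eq_zero_iff φ, ← ht, mul_right_comm, core_castLE_mul_leaf, zero_mul]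
  have htj₁ : (t : ℕ) = j₁ := by
    rw [← core_mul_leaf_eq_zero_iff φ, ← ht, mul_assoc, hm, core_mul_core φ (Ne.symm hmj)]
  exact h₁ (Fin.ext (htj.symm.trans htj₁))

end Mgraph

theorem no_semigroup_for_Mnk_general (n k : ℕ) (hk : 4 ≤ k) (hkn : k ≤ n)
    (S : Type*) [CommSemigroupWithZero S] :
    ¬ Nonempty (zdGraph S ≃g Mgraph n k) := by
  rintro ⟨φ⟩
  let j : Fin 4 → Fin k := Fin.castLE hk
  have hj (a b : Fin 4) (h : a ≠ b) : j a ≠ j b := (Fin.castLE_injective hk).ne h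
  obtain ⟨m, hm⟩ := Mgraph.exists_leaf_mul_leaf_eq_core φ hkn (hj 0 1 (by decide))
  have h₂ := Mgraph.leaf_mul_leaf_eq_core_castLE φ hkn (hj 0 1 (by decide))
    (hj 2 0 (by decide)) (hj 2 1 (by decide)) hm
  have h₃ := Mgraph.leaf_mul_leaf_eq_core_castLE φ hkn (hj 0 1 (by decide))
    (hj 3 0 (by decide)) (hj 3 1 (by decide)) hm
  exact absurd (h₂.symm.trans h₃) (by simp [j, Fin.ext_iff])

/-- **Corollary 3.2(1).** For n ≥ k ≥ 4, the complete graph Kₙ together with k end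
vertices attached to k distinct vertices has no corresponding semigroup. -/
theorem no_semigroup_for_Mnk (n k : ℕ) (hk : 4 ≤ k) (hkn : k ≤ n)
    (S : Type*) [CommSemigroupWithZero S] (hS : IsZeroDivisorSemigroup S) :
    ¬ Nonempty (zdGraph S ≃g Mgraph n k) :=
  no_semigroup_for_Mnk_general n k hk hkn S
end
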